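/- Let c ≥ 0, let (β_t)_{t≥0} be a sequence of nonnegative real numbers, set α_t = (2/(t+2))^{2/3} for integers t ≥ 0, and let (r_t)_{t≥0} be a nonnegative real sequence satisfying r_{t+1} ≤ (1 − α_t)·r_t + c·β_t for all t ≥ 0. Then for every integer T ≥ 0: r_T ≤ r_0/(T+1)^{1/3} + c·(Σ_{t=0}^{T−1} β_t·(t+2)^{1/3})/(T+1)^{1/3}. -/

import Mathlib

/-!
Multiplying the recursion by the weight `w_t = (t+1)^{1/3}` turns it into a telescoping
inequality `w_{t+1} r_{t+1} ≤ w_t r_t + c β_t w_{t+1}`, because `w_{t+1} (1 - α_t) ≤ w_t`.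
The latter holds since, for `y = t + 2`, factoring the difference of cubes `y - (y-1) = 1` gives
`y^{1/3} - (y-1)^{1/3} ≤ y^{-2/3} ≤ 2^{2/3} y^{-1/3} = α_t y^{1/3}`.
-/

open Finset

lemma weighted_le_of_le_mul_add {r a b w : ℕ → ℝ} (hr : ∀ t, 0 ≤ r t) (hw : ∀ t, 0 ≤ w t)
    (hrec : ∀ t, r (t + 1) ≤ a t * r t + b t) (hwa : ∀ t, w (t + 1) * a t ≤ w t) (T : ℕ) :
    w T * r T ≤ w 0 * r 0 + ∑ t ∈ range T, w (t + 1) * b t := by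
  induction T with
  | zero => simp
  | succ n ih =>
    calc w (n + 1) * r (n + 1)
        ≤ w (n + 1) * (a n * r n + b n) := mul_le_mul_of_nonneg_left (hrec n) (hw _)
      _ = (w (n + 1) * a n) * r n + w (n + 1) * b n := by ring
      _ ≤ w n * r n + w (n + 1) * b n := by gcongr; exacts [hr n, hwa n]
      _ ≤ w 0 * r 0 + ∑ t ∈ range (n + 1), w (t + 1) * b t := by
        rw [sum_range_succ]; linarith

lemma rpow_one_third_pow_three {y : ℝ} (hy : 0 ≤ y) : (y ^ ((1 : ℝ) / 3)) ^ 3 = y := by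
  rw [one_div]; exact_mod_cast Real.rpow_inv_natCast_pow hy (n := 3) (by norm_num)

lemma rpow_one_third_mul_one_sub_le {y : ℝ} (hy : 1 ≤ y) :
    y ^ ((1 : ℝ) / 3) * (1 - (2 / y) ^ ((2 : ℝ) / 3)) ≤ (y - 1) ^ ((1 : ℝ) / 3) := by
  set v := y ^ ((1 : ℝ) / 3)
  set u := (y - 1) ^ ((1 : ℝ) / 3)
  have hv3 : v ^ 3 = y := rpow_one_third_pow_three (by linarith)
  have hu3 : u ^ 3 = y - 1 := rpow_one_third_pow_three (by linarith)
  have hv : 1 ≤ v := Real.one_le_rpow hy (by norm_num)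
  have htwo : 1 ≤ (2 : ℝ) ^ ((2 : ℝ) / 3) := Real.one_le_rpow (by norm_num) (by norm_num)
  have huv : u ≤ v := Real.rpow_le_rpow (by linarith) (by linarith) (by norm_num)
  have hα : (2 / y) ^ ((2 : ℝ) / 3) = 2 ^ ((2 : ℝ) / 3) / v ^ 2 := by
    have hy23 : y ^ ((2 : ℝ) / 3) = v ^ 2 := by
      rw [show (2 : ℝ) / 3 = 1 / 3 * (2 : ℕ) by norm_num, Real.rpow_mul_natCast (by linarith)]
    rw [Real.div_rpow (by norm_num) (by linarith), hy23]
  -- `(v - u) (v² + uv + u²) = v³ - u³ = 1`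
  have hgap : (v - u) * v ^ 2 ≤ 1 := by
    nlinarith [mul_nonneg (sub_nonneg.2 huv) (by positivity : 0 ≤ u * v + u ^ 2)]
  rw [hα]
  calc v * (1 - 2 ^ ((2 : ℝ) / 3) / v ^ 2) = v - 2 ^ ((2 : ℝ) / 3) / v := by field_simp
    _ ≤ v - 1 / v ^ 2 := by
      refine sub_le_sub_left ?_ v
      calc 1 / v ^ 2 ≤ 1 / v := by gcongr; nlinarith
        _ ≤ 2 ^ ((2 : ℝ) / 3) / v := by gcongr
    _ ≤ u := by rw [sub_le_comm, le_div_iff₀ (by positivity)]; exact hgap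

theorem stmt_5 (c : ℝ) (β : ℕ → ℝ)
    (r : ℕ → ℝ) (hr : ∀ t, 0 ≤ r t)
    (hrec : ∀ t : ℕ, r (t + 1) ≤ (1 - (2 / ((t : ℝ) + 2)) ^ ((2 : ℝ) / 3)) * r t + c * β t)
    (T : ℕ) :
    r T ≤ r 0 / ((T : ℝ) + 1) ^ ((1 : ℝ) / 3)
      + c * (∑ t ∈ range T, β t * ((t : ℝ) + 2) ^ ((1 : ℝ) / 3))
        / ((T : ℝ) + 1) ^ ((1 : ℝ) / 3) := by
  set w : ℕ → ℝ := fun t ↦ ((t : ℝ) + 1) ^ ((1 : ℝ) / 3)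
  have hw_succ (t : ℕ) : w (t + 1) = ((t : ℝ) + 2) ^ ((1 : ℝ) / 3) := by
    simp only [w]; push_cast; ring_nf
  have hwa (t : ℕ) : w (t + 1) * (1 - (2 / ((t : ℝ) + 2)) ^ ((2 : ℝ) / 3)) ≤ w t := by
    have h := rpow_one_third_mul_one_sub_le (y := (t : ℝ) + 2) (by linarith [t.cast_nonneg (α := ℝ)])
    rwa [← hw_succ, show (t : ℝ) + 2 - 1 = t + 1 by ring] at h
  have key := weighted_le_of_le_mul_add hr (fun t ↦ by positivity) hrec hwa T
  simp only [hw_succ, w, CharP.cast_eq_zero, zero_add, Real.one_rpow, one_mul] at key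
  rw [← add_div, le_div_iff₀ (by positivity), mul_comm, mul_sum]
  exact key.trans_eq (congrArg _ (sum_congr rfl fun t _ ↦ by ring))
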